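/- For every binary word v there exists a nontrivial element g ∈ G which fixes every binary word that does not have v as a prefix; that is, the rigid vertex stabilizer of G at every vertex of the tree is nontrivial. Together with level-transitivity this says G is weakly branch. -/

import Mathlib

-- The generators `a` and `b` of the iterated monodromy group of `z^2-1`,
-- as functions on binary words (`false` = x = left, `true` = y = right),
-- defined by mutual recursion.
mutual
def aFun : List Bool → List Bool
  | [] => []
  | false :: w => true :: bFun w
  | true :: w => false :: w

def bFun : List Bool → List Bool
  | [] => []
  | false :: w => false :: aFun w
  | true :: w => true :: w
end

-- The inverses of `aFun`/`bFun`.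
mutual
def aInv : List Bool → List Bool
  | [] => []
  | true :: w => false :: bInv w
  | false :: w => true :: w

def bInv : List Bool → List Bool
  | [] => []
  | false :: w => false :: aInv w
  | true :: w => true :: w
end

mutual
theorem aFun_aInv : ∀ w, aFun (aInv w) = w
  | [] => rfl
  | true :: w => by simp [aInv, aFun, bFun_bInv w]
  | false :: w => by simp [aInv, aFun]

theorem bFun_bInv : ∀ w, bFun (bInv w) = w
  | [] => rfl
  | false :: w => by simp [bInv, bFun, aFun_aInv w]
  | true :: w => by simp [bInv, bFun]
end

mutual
theorem aInv_aFun : ∀ w, aInv (aFun w) = w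
  | [] => rfl
  | false :: w => by simp [aFun, aInv, bInv_bFun w]
  | true :: w => by simp [aFun, aInv]

theorem bInv_bFun : ∀ w, bInv (bFun w) = w
  | [] => rfl
  | false :: w => by simp [bFun, bInv, aInv_aFun w]
  | true :: w => by simp [bFun, bInv]
end

/-- `a` as a permutation of the set of binary words. -/
def aPerm : Equiv.Perm (List Bool) := ⟨aFun, aInv, aInv_aFun, aFun_aInv⟩
/-- `b` as a permutation of the set of binary words. -/
def bPerm : Equiv.Perm (List Bool) := ⟨bFun, bInv, bInv_bFun, bFun_bInv⟩

mutual
theorem aFun_length : ∀ w, (aFun w).length = w.length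
  | [] => rfl
  | false :: w => by simp [aFun, bFun_length w]
  | true :: w => by simp [aFun]

theorem bFun_length : ∀ w, (bFun w).length = w.length
  | [] => rfl
  | false :: w => by simp [bFun, aFun_length w]
  | true :: w => by simp [bFun]
end

mutual
theorem aFun_prefix : ∀ u v, u <+: v → aFun u <+: aFun v
  | [], v, _ => by simp [aFun]
  | false :: u, false :: v, h => by
      simp only [List.cons_prefix_cons] at h
      simpa [aFun, List.cons_prefix_cons] using bFun_prefix u v h.2
  | true :: u, true :: v, h => by
      simp only [List.cons_prefix_cons] at h
      simpa [aFun, List.cons_prefix_cons] using h.2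
  | false :: u, true :: v, h => by simp [List.cons_prefix_cons] at h
  | true :: u, false :: v, h => by simp [List.cons_prefix_cons] at h
  | _ :: u, [], h => by simp at h

theorem bFun_prefix : ∀ u v, u <+: v → bFun u <+: bFun v
  | [], v, _ => by simp [bFun]
  | false :: u, false :: v, h => by
      simp only [List.cons_prefix_cons] at h
      simpa [bFun, List.cons_prefix_cons] using aFun_prefix u v h.2
  | true :: u, true :: v, h => by
      simp only [List.cons_prefix_cons] at h
      simpa [bFun, List.cons_prefix_cons] using h.2
  | false :: u, true :: v, h => by simp [List.cons_prefix_cons] at h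
  | true :: u, false :: v, h => by simp [List.cons_prefix_cons] at h
  | _ :: u, [], h => by simp at h
end

/-- The group of automorphisms of the binary rooted tree: bijections of the set of
binary words preserving word length and the prefix relation. -/
def treeAut : Subgroup (Equiv.Perm (List Bool)) where
  carrier := {f | (∀ w, (f w).length = w.length) ∧ ∀ u v : List Bool, u <+: v → f u <+: f v}
  one_mem' := ⟨fun _ => rfl, fun _ _ h => h⟩
  mul_mem' := by
    rintro f g ⟨hf1, hf2⟩ ⟨hg1, hg2⟩
    exact ⟨fun w => (hf1 _).trans (hg1 w), fun u v h => hf2 _ _ (hg2 _ _ h)⟩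
  inv_mem' := by
    rintro f ⟨hf1, hf2⟩
    constructor
    · intro w
      have := hf1 (f⁻¹ w)
      simpa using this.symm
    · intro u v h
      have hlen : (f⁻¹ u).length ≤ (f⁻¹ v).length := by
        have h1 : (f⁻¹ u).length = u.length := by have := hf1 (f⁻¹ u); simpa using this.symm
        have h2 : (f⁻¹ v).length = v.length := by have := hf1 (f⁻¹ v); simpa using this.symm
        rw [h1, h2]; exact h.length_le
      set p := (f⁻¹ v).take (f⁻¹ u).length with hp
      have hpv : p <+: f⁻¹ v := List.take_prefix _ _
      have hplen : p.length = (f⁻¹ u).length := by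
        simp only [hp, List.length_take]; exact Nat.min_eq_left hlen
      have hfp : f p <+: v := by
        have := hf2 _ _ hpv
        simpa using this
      have hfplen : (f p).length = u.length := by
        rw [hf1 p, hplen]
        have := hf1 (f⁻¹ u); simpa using this.symm
      have : f p = u := by
        rcases List.prefix_or_prefix_of_prefix hfp h with h' | h'
        · exact h'.eq_of_length hfplen
        · exact (h'.eq_of_length hfplen.symm).symm
      have : p = f⁻¹ u := by
        have := congrArg (f⁻¹ : Equiv.Perm (List Bool)) this
        simpa using this
      rw [← this]; exact hpv

/-- The generator `a` as a tree automorphism. -/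
def A : treeAut := ⟨aPerm, aFun_length, aFun_prefix⟩
/-- The generator `b` as a tree automorphism. -/
def B : treeAut := ⟨bPerm, bFun_length, bFun_prefix⟩

/-- The iterated monodromy group of `z ↦ z² - 1`: the subgroup of the automorphism
group of the binary rooted tree generated by `a` and `b`. -/
def G : Subgroup treeAut := Subgroup.closure {A, B}

/-- Apply a tree automorphism to a binary word. -/
def app (g : treeAut) (w : List Bool) : List Bool := g.val w

-- ===== auxiliary development =====

def l0 (f : List Bool → List Bool) : List Bool → List Bool
  | [] => []
  | false :: w => false :: f w
  | true :: w => true :: w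

def l1 (f : List Bool → List Bool) : List Bool → List Bool
  | [] => []
  | false :: w => false :: w
  | true :: w => true :: f w

def lift0E (f : Equiv.Perm (List Bool)) : Equiv.Perm (List Bool) where
  toFun := l0 f
  invFun := l0 f.symm
  left_inv := by rintro (_ | ⟨_ | _, w⟩) <;> simp [l0]
  right_inv := by rintro (_ | ⟨_ | _, w⟩) <;> simp [l0]

def lift1E (f : Equiv.Perm (List Bool)) : Equiv.Perm (List Bool) where
  toFun := l1 f
  invFun := l1 f.symm
  left_inv := by rintro (_ | ⟨_ | _, w⟩) <;> simp [l1]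
  right_inv := by rintro (_ | ⟨_ | _, w⟩) <;> simp [l1]

theorem l0_length (f : List Bool → List Bool) (hf : ∀ w, (f w).length = w.length) :
    ∀ w, (l0 f w).length = w.length := by
  rintro (_ | ⟨_ | _, w⟩) <;> simp [l0, hf]

theorem l1_length (f : List Bool → List Bool) (hf : ∀ w, (f w).length = w.length) :
    ∀ w, (l1 f w).length = w.length := by
  rintro (_ | ⟨_ | _, w⟩) <;> simp [l1, hf]

theorem l0_prefix (f : List Bool → List Bool)
    (hf : ∀ u v : List Bool, u <+: v → f u <+: f v) :
    ∀ u v : List Bool, u <+: v → l0 f u <+: l0 f v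
  | [], v, _ => by simp [l0]
  | false :: u, false :: v, h => by
      simp only [List.cons_prefix_cons] at h
      simpa [l0, List.cons_prefix_cons] using hf u v h.2
  | true :: u, true :: v, h => by
      simp only [List.cons_prefix_cons] at h
      simpa [l0, List.cons_prefix_cons] using h.2
  | false :: u, true :: v, h => by simp [List.cons_prefix_cons] at h
  | true :: u, false :: v, h => by simp [List.cons_prefix_cons] at h
  | _ :: u, [], h => by simp at h

theorem l1_prefix (f : List Bool → List Bool)
    (hf : ∀ u v : List Bool, u <+: v → f u <+: f v) :
    ∀ u v : List Bool, u <+: v → l1 f u <+: l1 f v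
  | [], v, _ => by simp [l1]
  | false :: u, false :: v, h => by
      simp only [List.cons_prefix_cons] at h
      simpa [l1, List.cons_prefix_cons] using h.2
  | true :: u, true :: v, h => by
      simp only [List.cons_prefix_cons] at h
      simpa [l1, List.cons_prefix_cons] using hf u v h.2
  | false :: u, true :: v, h => by simp [List.cons_prefix_cons] at h
  | true :: u, false :: v, h => by simp [List.cons_prefix_cons] at h
  | _ :: u, [], h => by simp at h

/-- The embedding `h ↦ (h, 1)` acting on the `x`-subtree. -/
def Phi0 (g : treeAut) : treeAut :=
  ⟨lift0E g.val, l0_length _ g.prop.1, l0_prefix _ g.prop.2⟩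

/-- The embedding `h ↦ (1, h)` acting on the `y`-subtree. -/
def Phi1 (g : treeAut) : treeAut :=
  ⟨lift1E g.val, l1_length _ g.prop.1, l1_prefix _ g.prop.2⟩

theorem app_phi0_nil (g : treeAut) : app (Phi0 g) [] = [] := rfl
theorem app_phi0_false (g : treeAut) (w : List Bool) :
    app (Phi0 g) (false :: w) = false :: app g w := rfl
theorem app_phi0_true (g : treeAut) (w : List Bool) :
    app (Phi0 g) (true :: w) = true :: w := rfl
theorem app_phi1_nil (g : treeAut) : app (Phi1 g) [] = [] := rfl
theorem app_phi1_true (g : treeAut) (w : List Bool) :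
    app (Phi1 g) (true :: w) = true :: app g w := rfl
theorem app_phi1_false (g : treeAut) (w : List Bool) :
    app (Phi1 g) (false :: w) = false :: w := rfl

theorem treeAut_ext {g h : treeAut} (H : ∀ w, app g w = app h w) : g = h :=
  Subtype.ext (Equiv.ext H)

theorem app_mul (g h : treeAut) (w : List Bool) : app (g * h) w = app g (app h w) := rfl
theorem app_one (w : List Bool) : app 1 w = w := rfl

theorem app_nil (g : treeAut) : app g [] = [] := by
  have := g.prop.1 ([] : List Bool)
  exact List.length_eq_zero_iff.mp this

theorem app_inv (g : treeAut) (w : List Bool) : app g (app g⁻¹ w) = w :=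
  g.val.apply_symm_apply w

theorem app_inv' (g : treeAut) (w : List Bool) : app g⁻¹ (app g w) = w :=
  g.val.symm_apply_apply w

theorem phi0_mul (g h : treeAut) : Phi0 (g * h) = Phi0 g * Phi0 h := by
  apply treeAut_ext
  rintro (_ | ⟨_ | _, w⟩) <;> rfl

theorem phi1_mul (g h : treeAut) : Phi1 (g * h) = Phi1 g * Phi1 h := by
  apply treeAut_ext
  rintro (_ | ⟨_ | _, w⟩) <;> rfl

theorem phi0_one : Phi0 1 = 1 := by
  apply treeAut_ext
  rintro (_ | ⟨_ | _, w⟩) <;> rfl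

theorem phi1_one : Phi1 1 = 1 := by
  apply treeAut_ext
  rintro (_ | ⟨_ | _, w⟩) <;> rfl

theorem phi0_inv (g : treeAut) : Phi0 g⁻¹ = (Phi0 g)⁻¹ := by
  apply eq_inv_of_mul_eq_one_right
  rw [← phi0_mul, mul_inv_cancel, phi0_one]

theorem phi1_inv (g : treeAut) : Phi1 g⁻¹ = (Phi1 g)⁻¹ := by
  apply eq_inv_of_mul_eq_one_right
  rw [← phi1_mul, mul_inv_cancel, phi1_one]

theorem A_mem : A ∈ G := Subgroup.subset_closure (by simp)
theorem B_mem : B ∈ G := Subgroup.subset_closure (by simp)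

theorem app_A (w : List Bool) : app A w = aFun w := rfl
theorem app_B (w : List Bool) : app B w = bFun w := rfl
theorem app_Ainv (w : List Bool) : app A⁻¹ w = aInv w := rfl
theorem app_Binv (w : List Bool) : app B⁻¹ w = bInv w := rfl

/-- Every element of `G` is a `0`-section of an element of `G` stabilizing the subtrees. -/
theorem sec0 : ∀ g ∈ G, ∃ X ∈ G, ∀ w, app X (false :: w) = false :: app g w := by
  intro g hg
  refine Subgroup.closure_induction ?_ ?_ ?_ ?_ hg
  · rintro x (rfl | rfl)
    · exact ⟨B, B_mem, fun w => by simp [app_B, app_A, bFun]⟩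
    · refine ⟨A * A, mul_mem A_mem A_mem, fun w => ?_⟩
      simp only [app_mul, app_A]
      simp only [aFun]
      rfl
  · exact ⟨1, one_mem _, fun w => rfl⟩
  · rintro x y hx hy ⟨X, hX, hXs⟩ ⟨Y, hY, hYs⟩
    exact ⟨X * Y, mul_mem hX hY, fun w => by rw [app_mul, hYs, hXs, app_mul]⟩
  · rintro x hx ⟨X, hX, hXs⟩
    refine ⟨X⁻¹, inv_mem hX, fun w => ?_⟩
    have := hXs (app x⁻¹ w)
    rw [app_inv] at this
    rw [← this, app_inv']

theorem sec1 : ∀ g ∈ G, ∃ X ∈ G, ∀ w, app X (true :: w) = true :: app g w := by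
  intro g hg
  refine Subgroup.closure_induction ?_ ?_ ?_ ?_ hg
  · rintro x (rfl | rfl)
    · refine ⟨A⁻¹ * B * A, mul_mem (mul_mem (inv_mem A_mem) B_mem) A_mem, fun w => ?_⟩
      simp [app_mul, app_A, app_B, app_Ainv, aFun, bFun, aInv]
    · refine ⟨A * A, mul_mem A_mem A_mem, fun w => ?_⟩
      simp only [app_mul, app_A]
      simp only [aFun]
      rfl
  · exact ⟨1, one_mem _, fun w => rfl⟩
  · rintro x y hx hy ⟨X, hX, hXs⟩ ⟨Y, hY, hYs⟩
    exact ⟨X * Y, mul_mem hX hY, fun w => by rw [app_mul, hYs, hXs, app_mul]⟩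
  · rintro x hx ⟨X, hX, hXs⟩
    refine ⟨X⁻¹, inv_mem hX, fun w => ?_⟩
    have := hXs (app x⁻¹ w)
    rw [app_inv] at this
    rw [← this, app_inv']

theorem app_injective (X : treeAut) {z₁ z₂ : List Bool} (h : app X z₁ = app X z₂) : z₁ = z₂ :=
  X.val.injective h

/-- If `X` preserves the left subtree (acting there as `g`), then `X` maps the
right subtree into itself. -/
theorem head_true (X g : treeAut) (hX : ∀ w, app X (false :: w) = false :: app g w)
    (u : List Bool) : ∃ u', app X (true :: u) = true :: u' := by
  have hlen : (app X (true :: u)).length = u.length + 1 := X.prop.1 (true :: u)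
  cases hz : app X (true :: u) with
  | nil => rw [hz] at hlen; simp at hlen
  | cons c m =>
    cases c
    · exfalso
      have h1 : app X (false :: app g⁻¹ m) = false :: m := by rw [hX, app_inv]
      have h2 : app X (true :: u) = app X (false :: app g⁻¹ m) := by rw [hz, h1]
      have := app_injective X h2
      simp at this
    · exact ⟨m, rfl⟩

theorem head_false (X g : treeAut) (hX : ∀ w, app X (true :: w) = true :: app g w)
    (u : List Bool) : ∃ u', app X (false :: u) = false :: u' := by
  have hlen : (app X (false :: u)).length = u.length + 1 := X.prop.1 (false :: u)
  cases hz : app X (false :: u) with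
  | nil => rw [hz] at hlen; simp at hlen
  | cons c m =>
    cases c
    · exact ⟨m, rfl⟩
    · exfalso
      have h1 : app X (true :: app g⁻¹ m) = true :: m := by rw [hX, app_inv]
      have h2 : app X (false :: u) = app X (true :: app g⁻¹ m) := by rw [hz, h1]
      have := app_injective X h2
      simp at this

theorem conj_phi0 (X g h : treeAut) (hX : ∀ w, app X (false :: w) = false :: app g w) :
    X * Phi0 h * X⁻¹ = Phi0 (g * h * g⁻¹) := by
  have hXinv : ∀ u, app X⁻¹ (false :: u) = false :: app g⁻¹ u := by
    intro u
    have h1 : app X (false :: app g⁻¹ u) = false :: u := by rw [hX, app_inv]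
    rw [← h1, app_inv']
  apply treeAut_ext
  rintro (_ | ⟨_ | _, u⟩)
  · simp [app_mul, app_nil, app_phi0_nil]
  · rw [app_mul, app_mul, hXinv, app_phi0_false, hX, app_phi0_false, app_mul, app_mul]
  · obtain ⟨u', hu'⟩ := head_true X⁻¹ g⁻¹ hXinv u
    rw [app_mul, app_mul, hu', app_phi0_true, ← hu', app_inv, app_phi0_true]

theorem conj_phi1 (X g h : treeAut) (hX : ∀ w, app X (true :: w) = true :: app g w) :
    X * Phi1 h * X⁻¹ = Phi1 (g * h * g⁻¹) := by
  have hXinv : ∀ u, app X⁻¹ (true :: u) = true :: app g⁻¹ u := by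
    intro u
    have h1 : app X (true :: app g⁻¹ u) = true :: u := by rw [hX, app_inv]
    rw [← h1, app_inv']
  apply treeAut_ext
  rintro (_ | ⟨_ | _, u⟩)
  · simp [app_mul, app_nil, app_phi1_nil]
  · obtain ⟨u', hu'⟩ := head_false X⁻¹ g⁻¹ hXinv u
    rw [app_mul, app_mul, hu', app_phi1_false, ← hu', app_inv, app_phi1_false]
  · rw [app_mul, app_mul, hXinv, app_phi1_true, hX, app_phi1_true, app_mul, app_mul]

/-- The commutator `[b,a]`. -/
def Cc : treeAut := B * A * B⁻¹ * A⁻¹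

/-- The normal closure of the commutator `[b,a]` in `G`. -/
def N' : Subgroup treeAut := Subgroup.closure {x | ∃ g ∈ G, x = g * Cc * g⁻¹}

theorem Cc_mem_G : Cc ∈ G :=
  mul_mem (mul_mem (mul_mem B_mem A_mem) (inv_mem B_mem)) (inv_mem A_mem)

theorem N'_le_G : N' ≤ G := by
  rw [N', Subgroup.closure_le]
  rintro x ⟨g, hg, rfl⟩
  exact mul_mem (mul_mem hg Cc_mem_G) (inv_mem hg)

theorem Cc_mem_N' : Cc ∈ N' :=
  Subgroup.subset_closure ⟨1, one_mem _, by group⟩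

theorem conj_mem_N' (X : treeAut) (hXG : X ∈ G) : ∀ h ∈ N', X * h * X⁻¹ ∈ N' := by
  intro h hh
  refine Subgroup.closure_induction ?_ ?_ ?_ ?_ hh
  · rintro x ⟨g, hg, rfl⟩
    refine Subgroup.subset_closure ⟨X * g, mul_mem hXG hg, ?_⟩
    group
  · simpa using one_mem N'
  · intro x y hx hy hx' hy'
    have e : X * (x * y) * X⁻¹ = (X * x * X⁻¹) * (X * y * X⁻¹) := by group
    rw [e]; exact mul_mem hx' hy'
  · intro x hx hx'
    have e : X * x⁻¹ * X⁻¹ = (X * x * X⁻¹)⁻¹ := by group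
    rw [e]; exact inv_mem hx'

theorem app_Cc (u : List Bool) : app Cc u = bFun (aFun (bInv (aInv u))) := rfl

theorem phi0_Cc : Phi0 Cc = A * A * B * A⁻¹ * A⁻¹ * B⁻¹ := by
  apply treeAut_ext
  rintro (_ | ⟨_ | _, u⟩)
  · simp [app_mul, app_A, app_B, app_Ainv, app_Binv, app_phi0_nil, aFun, bFun, aInv, bInv]
  · rw [app_phi0_false, app_Cc]
    simp [app_mul, app_A, app_B, app_Ainv, app_Binv, aFun, bFun, aInv, bInv]
  · rw [app_phi0_true]
    simp [app_mul, app_A, app_B, app_Ainv, app_Binv, aFun, bFun, aInv, bInv,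
      aFun_aInv, bFun_bInv, aInv_aFun, bInv_bFun]

theorem phi1_Cc : Phi1 Cc = A⁻¹ * Phi0 Cc * A := by
  apply treeAut_ext
  rintro (_ | ⟨_ | _, u⟩)
  · simp [app_mul, app_A, app_Ainv, app_phi1_nil, app_phi0_nil, aFun, aInv]
  · rw [app_phi1_false, app_mul, app_mul, app_A]
    simp only [aFun]
    rw [app_phi0_true, app_Ainv]
    simp [aInv, bInv_bFun]
  · rw [app_phi1_true, app_mul, app_mul, app_A]
    simp only [aFun]
    rw [app_phi0_false, app_Ainv]
    simp [aInv]

theorem phi0_Cc_mem : Phi0 Cc ∈ N' := by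
  have e : Phi0 Cc = (A * Cc * A⁻¹)⁻¹ * Cc⁻¹ := by
    rw [phi0_Cc, Cc]
    group
    rw [← pow_two]
    group
  rw [e]
  exact mul_mem (inv_mem (Subgroup.subset_closure ⟨A, A_mem, rfl⟩)) (inv_mem Cc_mem_N')

theorem phi1_Cc_mem : Phi1 Cc ∈ N' := by
  have := conj_mem_N' A⁻¹ (inv_mem A_mem) _ phi0_Cc_mem
  rw [inv_inv] at this
  rw [phi1_Cc]
  exact this

theorem phi0_mem_N' {h : treeAut} (hh : h ∈ N') : Phi0 h ∈ N' := by
  refine Subgroup.closure_induction ?_ ?_ ?_ ?_ hh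
  · rintro x ⟨g, hg, rfl⟩
    obtain ⟨X, hXG, hXs⟩ := sec0 g hg
    rw [← conj_phi0 X g Cc hXs]
    exact conj_mem_N' X hXG _ phi0_Cc_mem
  · rw [phi0_one]; exact one_mem _
  · intro x y hx hy hx' hy'
    rw [phi0_mul]; exact mul_mem hx' hy'
  · intro x hx hx'
    rw [phi0_inv]; exact inv_mem hx'

theorem phi1_mem_N' {h : treeAut} (hh : h ∈ N') : Phi1 h ∈ N' := by
  refine Subgroup.closure_induction ?_ ?_ ?_ ?_ hh
  · rintro x ⟨g, hg, rfl⟩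
    obtain ⟨X, hXG, hXs⟩ := sec1 g hg
    rw [← conj_phi1 X g Cc hXs]
    exact conj_mem_N' X hXG _ phi1_Cc_mem
  · rw [phi1_one]; exact one_mem _
  · intro x y hx hy hx' hy'
    rw [phi1_mul]; exact mul_mem hx' hy'
  · intro x hx hx'
    rw [phi1_inv]; exact inv_mem hx'

/-- The recursively defined witness supported on the subtree at `v`. -/
def tAut : List Bool → treeAut
  | [] => Cc
  | false :: v => Phi0 (tAut v)
  | true :: v => Phi1 (tAut v)

theorem tAut_mem : ∀ v, tAut v ∈ N'
  | [] => Cc_mem_N'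
  | false :: v => phi0_mem_N' (tAut_mem v)
  | true :: v => phi1_mem_N' (tAut_mem v)

theorem tAut_ne : ∀ v, ∃ w, app (tAut v) w ≠ w
  | [] => by
      refine ⟨[false, false], ?_⟩
      rw [show tAut [] = Cc from rfl, app_Cc]
      simp [aInv, bInv, aFun, bFun]
  | false :: v => by
      obtain ⟨w, hw⟩ := tAut_ne v
      refine ⟨false :: w, ?_⟩
      rw [show tAut (false :: v) = Phi0 (tAut v) from rfl, app_phi0_false]
      simp only [ne_eq, List.cons.injEq, true_and]
      exact hw
  | true :: v => by
      obtain ⟨w, hw⟩ := tAut_ne v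
      refine ⟨true :: w, ?_⟩
      rw [show tAut (true :: v) = Phi1 (tAut v) from rfl, app_phi1_true]
      simp only [ne_eq, List.cons.injEq, true_and]
      exact hw

theorem tAut_supp : ∀ v w, ¬ (v <+: w) → app (tAut v) w = w
  | [], w, h => absurd List.nil_prefix h
  | false :: v, [], _ => app_nil _
  | false :: v, false :: u, h => by
      rw [show tAut (false :: v) = Phi0 (tAut v) from rfl, app_phi0_false,
        tAut_supp v u (fun hp => h (by simpa [List.cons_prefix_cons] using hp))]
  | false :: v, true :: u, _ => by
      rw [show tAut (false :: v) = Phi0 (tAut v) from rfl, app_phi0_true]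
  | true :: v, [], _ => app_nil _
  | true :: v, true :: u, h => by
      rw [show tAut (true :: v) = Phi1 (tAut v) from rfl, app_phi1_true,
        tAut_supp v u (fun hp => h (by simpa [List.cons_prefix_cons] using hp))]
  | true :: v, false :: u, _ => by
      rw [show tAut (true :: v) = Phi1 (tAut v) from rfl, app_phi1_false]

/-- every rigid vertex stabilizer of `G` is nontrivial: for every binary
word `v` there is a nontrivial `g ∈ G` fixing every word not having `v` as a prefix. -/
theorem G_rigid_stabilizers_nontrivial (v : List Bool) :
    ∃ g : treeAut, g ∈ G ∧ g ≠ 1 ∧ ∀ w : List Bool, ¬ (v <+: w) → app g w = w := by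
  refine ⟨tAut v, N'_le_G (tAut_mem v), ?_, tAut_supp v⟩
  obtain ⟨w, hw⟩ := tAut_ne v
  intro h1
  rw [h1] at hw
  exact hw rfl
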